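/- arXiv:1108.0065 — 3 statements merged into one kernel-verified Lean document; each statement's English description precedes it below -/
import Mathlib

section
/- Let p be an n×n real matrix with nonnegative entries such that the β-polytope 𝓑_p of p contains at least one point in its interior. Then the mean-field free energy F_MF(·|p) is strictly convex on 𝓑_p, it has a unique minimizer over 𝓑_p, and this minimizer lies in the interior of 𝓑_p. -/
open scoped BigOperators

/-- The permanent of an `n × n` real matrix. -/
noncomputable def permanent {n : ℕ} (p : Matrix (Fin n) (Fin n) ℝ) : ℝ :=
  ∑ σ : Equiv.Perm (Fin n), ∏ i, p i (σ i)

/-- A matrix is doubly stochastic: nonnegative entries, all row and column sums equal 1. -/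
def DoublyStochastic {n : ℕ} (β : Matrix (Fin n) (Fin n) ℝ) : Prop :=
  (∀ i j, 0 ≤ β i j) ∧ (∀ i, ∑ j, β i j = 1) ∧ (∀ j, ∑ i, β i j = 1)

/-- Membership in the β-polytope `𝓑_p` of `p`. -/
def InPolytope {n : ℕ} (p β : Matrix (Fin n) (Fin n) ℝ) : Prop :=
  DoublyStochastic β ∧ ∀ i j, p i j = 0 → β i j = 0

/-- Membership in the interior of the β-polytope of `p`. -/
def InInterior {n : ℕ} (p β : Matrix (Fin n) (Fin n) ℝ) : Prop :=
  InPolytope p β ∧ ∀ i j, 0 < p i j → 0 < β i j ∧ β i j < 1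

/-- Bethe free energy `F_BP(β|p)` (sum over entries with `p i j > 0`;
the convention `0 * log 0 = 0` holds since `Real.log 0 = 0`). -/
noncomputable def FBP {n : ℕ} (p β : Matrix (Fin n) (Fin n) ℝ) : ℝ :=
  ∑ i, ∑ j, if 0 < p i j then
    β i j * Real.log (β i j / p i j) - (1 - β i j) * Real.log (1 - β i j)
  else 0

/-- Mean-field free energy `F_MF(β|p)`. -/
noncomputable def FMF {n : ℕ} (p β : Matrix (Fin n) (Fin n) ℝ) : ℝ :=
  ∑ i, ∑ j, if 0 < p i j then
    β i j * Real.log (β i j / p i j) + (1 - β i j) * Real.log (1 - β i j)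
  else 0

/-- Fractional free energy `F_f^γ(β|p)`. -/
noncomputable def Ff {n : ℕ} (γ : ℝ) (p β : Matrix (Fin n) (Fin n) ℝ) : ℝ :=
  ∑ i, ∑ j, if 0 < p i j then
    β i j * Real.log (β i j / p i j) + γ * ((1 - β i j) * Real.log (1 - β i j))
  else 0

/-- Optimal fractional partition function `Z_of^γ(p) = exp(-min_{β ∈ 𝓑_p} F_f^γ(β|p))`
(the minimum is expressed as an infimum; it is attained since `𝓑_p` is nonempty and
compact when `permanent p > 0` and `F_f^γ(·|p)` is continuous on it). -/
noncomputable def Zof {n : ℕ} (γ : ℝ) (p : Matrix (Fin n) (Fin n) ℝ) : ℝ :=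
  Real.exp (-(sInf ((fun β => Ff γ p β) '' {β | InPolytope p β})))

/-!
For `p_ij > 0` the summand of `F_MF` is `-H(β_ij) - β_ij log p_ij`, where `H` is the
binary entropy, and entries with `p_ij = 0` are pinned to `0` on the polytope; strict concavity of
`H` therefore makes `F_MF` strictly convex on the polytope, which is compact, so there is exactly
one minimizer `β₀`. If `β₀` had an entry in `{0, 1}` with `p_ij > 0`, move from `β₀` towards an
interior point `β`: since `H(ts) ≥ -ts log(ts)`, the difference quotient of that summand is at
most `s log t + O(1) → -∞`, while by convexity the difference quotient of every other summand
stays below its secant slope. So `F_MF` decreases near `β₀`, a contradiction.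
-/

open Real Set Filter Topology

lemma tendsto_finset_sum_atBot {α ι G : Type*} [DecidableEq ι] [AddCommGroup G] [LinearOrder G]
    [IsOrderedAddMonoid G] {l : Filter α} {s : Finset ι} {f : ι → α → G} {i₀ : ι}
    (hi₀ : i₀ ∈ s) (h₀ : Tendsto (f i₀) l atBot)
    (hbdd : ∀ i ∈ s.erase i₀, IsBoundedUnder (· ≤ ·) l (f i)) :
    Tendsto (fun x => ∑ i ∈ s, f i x) l atBot := by
  obtain ⟨C, hC⟩ := isBoundedUnder_le_sum _ hbdd
  simp_rw [← Finset.add_sum_erase s _ hi₀]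
  refine tendsto_atBot_add_right_of_ge' l C h₀ ?_
  simpa only [eventually_map, Finset.sum_apply] using hC

lemma ConvexOn.sub_div_le_sub {s : Set ℝ} {f : ℝ → ℝ} (hf : ConvexOn ℝ s f) {x y t : ℝ}
    (hx : x ∈ s) (hy : y ∈ s) (ht₀ : 0 < t) (ht₁ : t ≤ 1) :
    (f ((1 - t) * x + t * y) - f x) / t ≤ f y - f x := by
  rw [div_le_iff₀ ht₀]
  have := hf.2 hx hy (sub_nonneg.2 ht₁) ht₀.le (sub_add_cancel 1 t)
  simp only [smul_eq_mul] at this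
  linarith

lemma not_isMinOn_of_tendsto_slope_atBot {E : Type*} [AddCommGroup E] [Module ℝ E]
    {s : Set E} (hs : Convex ℝ s) {f : E → ℝ} {x y : E} (hx : x ∈ s) (hy : y ∈ s)
    (h : Tendsto (fun t : ℝ => (f ((1 - t) • x + t • y) - f x) / t) (𝓝[>] 0) atBot) :
    ¬ IsMinOn f s x := by
  intro hmin
  obtain ⟨t, hneg, ht⟩ :=
    ((h.eventually_lt_atBot 0).and (Ioo_mem_nhdsGT (zero_lt_one' ℝ))).exists
  have hmem : (1 - t) • x + t • y ∈ s :=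
    hs hx hy (sub_nonneg.2 ht.2.le) ht.1.le (sub_add_cancel 1 t)
  have := (div_lt_iff₀ ht.1).1 hneg
  linarith [isMinOn_iff.1 hmin _ hmem]

lemma tendsto_binEntropy_mul_div_nhdsGT_zero {s : ℝ} (hs : 0 < s) :
    Tendsto (fun t => binEntropy (t * s) / t) (𝓝[>] 0) atTop := by
  have hlog : Tendsto (fun t => -s * (log t + log s)) (𝓝[>] 0) atTop :=
    (tendsto_atBot_add_const_right _ _ tendsto_log_nhdsGT_zero).const_mul_atBot_of_neg
      (neg_lt_zero.2 hs)
  refine tendsto_atTop_mono' _ ?_ hlog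
  filter_upwards [Ioo_mem_nhdsGT (one_div_pos.2 hs)] with t ⟨ht₀, ht₁⟩
  have hts : t * s < 1 := (lt_div_iff₀ hs).1 ht₁
  rw [le_div_iff₀ ht₀, binEntropy_eq_negMulLog_add_negMulLog_one_sub, negMulLog,
    log_mul ht₀.ne' hs.ne']
  have := negMulLog_nonneg (sub_nonneg.2 hts.le) (by linarith [mul_pos ht₀ hs])
  linarith

noncomputable def fmfEntry (q x : ℝ) : ℝ :=
  if 0 < q then x * log (x / q) + (1 - x) * log (1 - x) else 0

lemma FMF_eq_sum_fmfEntry {n : ℕ} (p β : Matrix (Fin n) (Fin n) ℝ) :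
    FMF p β = ∑ i, ∑ j, fmfEntry (p i j) (β i j) := rfl

lemma fmfEntry_of_pos {q : ℝ} (hq : 0 < q) (x : ℝ) :
    fmfEntry q x = -binEntropy x - x * log q := by
  rcases eq_or_ne x 0 with rfl | hx
  · simp [fmfEntry]
  · simp only [fmfEntry, hq, if_true, binEntropy, log_inv, log_div hx hq.ne']
    ring

lemma fmfEntry_of_nonpos {q : ℝ} (hq : q ≤ 0) (x : ℝ) : fmfEntry q x = 0 :=
  if_neg hq.not_gt

lemma continuous_fmfEntry (q : ℝ) : Continuous (fmfEntry q) := by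
  rcases lt_or_ge 0 q with hq | hq
  · simp only [funext (fmfEntry_of_pos hq)]
    fun_prop
  · simp only [funext (fmfEntry_of_nonpos hq)]
    exact continuous_const

lemma strictConvexOn_fmfEntry {q : ℝ} (hq : 0 < q) :
    StrictConvexOn ℝ (Icc 0 1) (fmfEntry q) := by
  refine ⟨convex_Icc 0 1, fun x hx y hy hxy a b ha hb hab => ?_⟩
  have := strictConcave_binEntropy.2 hx hy hxy ha hb hab
  simp only [fmfEntry_of_pos hq, smul_eq_mul] at this ⊢
  linear_combination this

lemma convexOn_fmfEntry (q : ℝ) : ConvexOn ℝ (Icc 0 1) (fmfEntry q) := by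
  rcases lt_or_ge 0 q with hq | hq
  · exact (strictConvexOn_fmfEntry hq).convexOn
  · simpa only [funext (fmfEntry_of_nonpos hq)] using convexOn_const 0 (convex_Icc 0 1)

lemma tendsto_fmfEntry_slope_atBot {q x y : ℝ} (hq : 0 < q) (hx : x = 0 ∨ x = 1)
    (hy : y ∈ Ioo 0 1) :
    Tendsto (fun t => (fmfEntry q ((1 - t) * x + t * y) - fmfEntry q x) / t) (𝓝[>] 0) atBot := by
  -- `s = |y - x|`; by the symmetry `H (1 - u) = H u` both vertices reduce to `H (t * s)`.
  obtain ⟨s, c, hs, hslope⟩ : ∃ s c : ℝ, 0 < s ∧ ∀ t ≠ 0,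
      (fmfEntry q ((1 - t) * x + t * y) - fmfEntry q x) / t = -(binEntropy (t * s) / t) + c := by
    rcases hx with rfl | rfl
    · refine ⟨y, -(y * log q), hy.1, fun t ht => ?_⟩
      rw [show (1 - t) * 0 + t * y = t * y by ring]
      simp only [fmfEntry_of_pos hq, binEntropy_zero]
      field_simp
      ring
    · refine ⟨1 - y, (1 - y) * log q, sub_pos.2 hy.2, fun t ht => ?_⟩
      rw [show (1 - t) * 1 + t * y = 1 - t * (1 - y) by ring]
      simp only [fmfEntry_of_pos hq, binEntropy_one_sub, binEntropy_one]
      field_simp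
      ring
  refine (tendsto_atBot_add_const_right _ c
    (tendsto_neg_atTop_atBot.comp (tendsto_binEntropy_mul_div_nhdsGT_zero hs))).congr' ?_
  filter_upwards [self_mem_nhdsWithin] with t (ht : 0 < t)
  exact (hslope t ht.ne').symm

section Polytope

variable {n : ℕ}

lemma DoublyStochastic.mem_Icc {β : Matrix (Fin n) (Fin n) ℝ} (h : DoublyStochastic β)
    (i j : Fin n) : β i j ∈ Icc 0 1 :=
  ⟨h.1 i j, h.2.1 i ▸ Finset.single_le_sum (fun j _ => h.1 i j) (Finset.mem_univ j)⟩

lemma convex_setOf_inPolytope (p : Matrix (Fin n) (Fin n) ℝ) :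
    Convex ℝ {β | InPolytope p β} := by
  rintro β₁ ⟨⟨hnn₁, hrow₁, hcol₁⟩, hz₁⟩ β₂ ⟨⟨hnn₂, hrow₂, hcol₂⟩, hz₂⟩ a b ha hb hab
  have happly : ∀ i j, (a • β₁ + b • β₂) i j = a * β₁ i j + b * β₂ i j := fun _ _ => rfl
  refine ⟨⟨fun i j => ?_, fun i => ?_, fun j => ?_⟩, fun i j hp => ?_⟩
  · rw [happly]
    exact add_nonneg (mul_nonneg ha (hnn₁ i j)) (mul_nonneg hb (hnn₂ i j))
  · simp only [happly, Finset.sum_add_distrib, ← Finset.mul_sum, hrow₁, hrow₂, mul_one, hab]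
  · simp only [happly, Finset.sum_add_distrib, ← Finset.mul_sum, hcol₁, hcol₂, mul_one, hab]
  · simp only [happly, hz₁ i j hp, hz₂ i j hp, mul_zero, add_zero]

lemma isClosed_setOf_inPolytope (p : Matrix (Fin n) (Fin n) ℝ) :
    IsClosed {β | InPolytope p β} := by
  simp only [InPolytope, DoublyStochastic, ofPred_and, ofPred_forall]
  refine ((isClosed_iInter fun i => isClosed_iInter fun j => ?_).inter
    ((isClosed_iInter fun i => ?_).inter (isClosed_iInter fun j => ?_))).inter
    (isClosed_iInter fun i => isClosed_iInter fun j => isClosed_iInter fun _ => ?_)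
  · exact isClosed_le continuous_const (by fun_prop)
  · exact isClosed_eq (by fun_prop) continuous_const
  · exact isClosed_eq (by fun_prop) continuous_const
  · exact isClosed_eq (by fun_prop) continuous_const

lemma isCompact_setOf_inPolytope (p : Matrix (Fin n) (Fin n) ℝ) :
    IsCompact {β | InPolytope p β} :=
  (isCompact_univ_pi fun _ => isCompact_univ_pi fun _ => isCompact_Icc).of_isClosed_subset
    (isClosed_setOf_inPolytope p) fun _ hβ i _ j _ => hβ.1.mem_Icc i j

lemma continuous_FMF (p : Matrix (Fin n) (Fin n) ℝ) : Continuous (FMF p) :=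
  continuous_finsetSum _ fun i _ => continuous_finsetSum _ fun j _ =>
    (continuous_fmfEntry (p i j)).comp (by fun_prop)

end Polytope

section FreeEnergy

variable {n : ℕ} {p : Matrix (Fin n) (Fin n) ℝ}

lemma strictConvexOn_FMF (hp : ∀ i j, 0 ≤ p i j) :
    StrictConvexOn ℝ {β | InPolytope p β} (FMF p) := by
  refine ⟨convex_setOf_inPolytope p, fun β₁ h₁ β₂ h₂ hne a b ha hb hab => ?_⟩
  obtain ⟨i₀, j₀, hne₀⟩ : ∃ i j, β₁ i j ≠ β₂ i j := by
    by_contra! h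
    exact hne (Matrix.ext h)
  have hp₀ : 0 < p i₀ j₀ := (hp i₀ j₀).lt_of_ne fun h => hne₀ <| by
    rw [h₁.2 _ _ h.symm, h₂.2 _ _ h.symm]
  have hle : ∀ i j, fmfEntry (p i j) ((a • β₁ + b • β₂) i j) ≤
      a * fmfEntry (p i j) (β₁ i j) + b * fmfEntry (p i j) (β₂ i j) := fun i j =>
    (convexOn_fmfEntry (p i j)).2 (h₁.1.mem_Icc i j) (h₂.1.mem_Icc i j) ha.le hb.le hab
  have hlt : fmfEntry (p i₀ j₀) ((a • β₁ + b • β₂) i₀ j₀) <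
      a * fmfEntry (p i₀ j₀) (β₁ i₀ j₀) + b * fmfEntry (p i₀ j₀) (β₂ i₀ j₀) :=
    (strictConvexOn_fmfEntry hp₀).2 (h₁.1.mem_Icc i₀ j₀) (h₂.1.mem_Icc i₀ j₀) hne₀ ha hb hab
  simp only [FMF_eq_sum_fmfEntry, smul_eq_mul, Finset.mul_sum, ← Finset.sum_add_distrib]
  exact Finset.sum_lt_sum (fun i _ => Finset.sum_le_sum fun j _ => hle i j)
    ⟨i₀, Finset.mem_univ _, Finset.sum_lt_sum (fun j _ => hle i₀ j) ⟨j₀, Finset.mem_univ _, hlt⟩⟩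

lemma tendsto_FMF_slope_atBot {β₀ β : Matrix (Fin n) (Fin n) ℝ} (h₀ : InPolytope p β₀)
    (hβ : InInterior p β) {i₀ j₀ : Fin n} (hp₀ : 0 < p i₀ j₀)
    (hvert : β₀ i₀ j₀ = 0 ∨ β₀ i₀ j₀ = 1) :
    Tendsto (fun t : ℝ => (FMF p ((1 - t) • β₀ + t • β) - FMF p β₀) / t) (𝓝[>] 0) atBot := by
  set slope : Fin n × Fin n → ℝ → ℝ := fun ij t =>
    (fmfEntry (p ij.1 ij.2) ((1 - t) * β₀ ij.1 ij.2 + t * β ij.1 ij.2) -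
      fmfEntry (p ij.1 ij.2) (β₀ ij.1 ij.2)) / t
  have hsum : ∀ t, (FMF p ((1 - t) • β₀ + t • β) - FMF p β₀) / t = ∑ ij, slope ij t := by
    intro t
    simp only [FMF_eq_sum_fmfEntry, slope, ← Finset.sum_div, Finset.sum_sub_distrib,
      Fintype.sum_prod_type]
    rfl
  simp only [hsum]
  refine tendsto_finset_sum_atBot (Finset.mem_univ (i₀, j₀))
    (tendsto_fmfEntry_slope_atBot hp₀ hvert (hβ.2 _ _ hp₀)) fun ij _ => ?_
  refine isBoundedUnder_of_eventually_le (a := fmfEntry (p ij.1 ij.2) (β ij.1 ij.2) -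
    fmfEntry (p ij.1 ij.2) (β₀ ij.1 ij.2)) ?_
  filter_upwards [Ioc_mem_nhdsGT zero_lt_one] with t ht
  exact (convexOn_fmfEntry _).sub_div_le_sub (h₀.1.mem_Icc _ _) (hβ.1.1.mem_Icc _ _) ht.1 ht.2

lemma inInterior_of_isMinOn {β₀ β : Matrix (Fin n) (Fin n) ℝ}
    (hmin : IsMinOn (FMF p) {β | InPolytope p β} β₀) (h₀ : InPolytope p β₀)
    (hβ : InInterior p β) : InInterior p β₀ := by
  refine ⟨h₀, fun i j hp => ?_⟩
  by_contra hnot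
  have hvert : β₀ i j = 0 ∨ β₀ i j = 1 := by
    obtain ⟨h0, h1⟩ := h₀.1.mem_Icc i j
    by_contra! h
    exact hnot ⟨h0.lt_of_ne' h.1, h1.lt_of_ne h.2⟩
  exact not_isMinOn_of_tendsto_slope_atBot (convex_setOf_inPolytope p) h₀ hβ.1
    (tendsto_FMF_slope_atBot h₀ hβ hp hvert) hmin

end FreeEnergy

theorem FMF_strictConvex_unique_interior_min {n : ℕ}
    (p : Matrix (Fin n) (Fin n) ℝ) (hp : ∀ i j, 0 ≤ p i j)
    (hint : ∃ β, InInterior p β) :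
    (∀ β₁ β₂ : Matrix (Fin n) (Fin n) ℝ, InPolytope p β₁ → InPolytope p β₂ →
        β₁ ≠ β₂ → ∀ t : ℝ, 0 < t → t < 1 →
        FMF p (t • β₁ + (1 - t) • β₂) < t * FMF p β₁ + (1 - t) * FMF p β₂) ∧
    (∃ β₀, InInterior p β₀ ∧ (∀ β, InPolytope p β → FMF p β₀ ≤ FMF p β) ∧
      ∀ β', InPolytope p β' → (∀ β, InPolytope p β → FMF p β' ≤ FMF p β) →
        β' = β₀) := by
  have hconv := strictConvexOn_FMF hp
  obtain ⟨β, hβ⟩ := hint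
  obtain ⟨β₀, h₀, hmin⟩ := (isCompact_setOf_inPolytope p).exists_isMinOn ⟨β, hβ.1⟩
    (continuous_FMF p).continuousOn
  exact ⟨fun β₁ β₂ h₁ h₂ hne t ht₀ ht₁ =>
      hconv.2 h₁ h₂ hne ht₀ (sub_pos.2 ht₁) (add_sub_cancel t 1),
    β₀, inInterior_of_isMinOn hmin h₀ hβ, hmin,
    fun β' h' hmin' => hconv.eq_of_isMinOn (isMinOn_iff.2 hmin') hmin h' h₀⟩
end

section
/- Let p be an n×n real matrix with nonnegative entries. Suppose β lies in the interior of the β-polytope 𝓑_p of p and solves the mean-field equations for p. Then perm(p) = Z_MF(β|p) · perm(N) · ∏_{(i,j): p_ij>0} (1−β_ij), where N is the n×n matrix with entries N_ij = β_ij/(1−β_ij) for p_ij > 0 and N_ij = 0 for p_ij = 0. -/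
open scoped BigOperators

/-!
On the interior of `𝓑_p` the mean-field equations say
`β i j / (1 - β i j) = p i j / (v i * w j)`, so the matrix `N` is `p` with its rows scaled by
`(v i)⁻¹` and its columns by `(w j)⁻¹`, and
`perm N = perm p / (∏ v * ∏ w)`. The same equations turn every term of `F_MF` into
`log (1 - β i j) - β i j * (log (v i) + log (w j))`; summing against the doubly stochastic `β`
gives `exp (-F_MF) * ∏ (1 - β i j) = ∏ v * ∏ w`, which cancels the scaling.
-/

open Real Finset

theorem permanent_diag_mul_mul_diag {n : ℕ} (a b : Fin n → ℝ)
    (p : Matrix (Fin n) (Fin n) ℝ) :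
    permanent (fun i j => a i * p i j * b j) = (∏ i, a i) * (∏ j, b j) * permanent p := by
  unfold permanent
  rw [mul_sum]
  refine sum_congr rfl fun σ _ => ?_
  rw [prod_mul_distrib, prod_mul_distrib, Equiv.prod_comp σ b]
  ring

theorem DoublyStochastic.sum_sum_mul_add {n : ℕ} {β : Matrix (Fin n) (Fin n) ℝ}
    (hβ : DoublyStochastic β) (x y : Fin n → ℝ) :
    ∑ i, ∑ j, β i j * (x i + y j) = ∑ i, x i + ∑ j, y j := by
  obtain ⟨-, hrow, hcol⟩ := hβ
  simp only [mul_add, sum_add_distrib]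
  rw [sum_comm (f := fun i j => β i j * y j)]
  simp only [← sum_mul, hrow, hcol, one_mul]

theorem mul_log_div_add_mul_log_one_sub {b q c : ℝ} (hq : 0 < q) (hb : b < 1)
    (hc : 0 < c) (h : b / (1 - b) = q / c) :
    b * log (b / q) + (1 - b) * log (1 - b) = log (1 - b) - b * log c := by
  have hb' : 0 < 1 - b := sub_pos.mpr hb
  have hbq : b / q = (1 - b) / c := by
    rw [div_eq_div_iff hb'.ne' hc.ne'] at h
    rw [div_eq_div_iff hq.ne' hc.ne']
    linarith
  rw [hbq, log_div hb'.ne' hc.ne']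
  ring

section MeanField

variable {n : ℕ} {p β : Matrix (Fin n) (Fin n) ℝ} {v w : Fin n → ℝ}

theorem mf_ratio_eq_diag_mul_mul_diag (hp : ∀ i j, 0 ≤ p i j)
    (hvw : ∀ i j, β i j / (1 - β i j) = p i j / (v i * w j)) :
    (fun i j => if 0 < p i j then β i j / (1 - β i j) else 0) =
      fun i j => (v i)⁻¹ * p i j * (w j)⁻¹ := by
  funext i j
  split_ifs with h
  · rw [hvw, div_eq_mul_inv, mul_inv]
    ring
  · simp [le_antisymm (not_lt.mp h) (hp i j)]

theorem FMF_eq_of_mf_equations (hp : ∀ i j, 0 ≤ p i j) (hβ : InInterior p β)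
    (hv : ∀ i, 0 < v i) (hw : ∀ j, 0 < w j)
    (hvw : ∀ i j, β i j / (1 - β i j) = p i j / (v i * w j)) :
    FMF p β = ∑ i, ∑ j, (if 0 < p i j then log (1 - β i j) else 0) -
      (∑ i, log (v i) + ∑ j, log (w j)) := by
  obtain ⟨⟨hds, hzero⟩, hint⟩ := hβ
  have hterm : ∀ i j, (if 0 < p i j then
      β i j * log (β i j / p i j) + (1 - β i j) * log (1 - β i j) else 0) =
      (if 0 < p i j then log (1 - β i j) else 0) - β i j * (log (v i) + log (w j)) := by
    intro i j
    split_ifs with h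
    · rw [← log_mul (hv i).ne' (hw j).ne']
      exact mul_log_div_add_mul_log_one_sub h (hint i j h).2
        (mul_pos (hv i) (hw j)) (hvw i j)
    · simp [hzero i j (le_antisymm (not_lt.mp h) (hp i j))]
  unfold FMF
  simp only [hterm, sum_sub_distrib, hds.sum_sum_mul_add]

theorem prod_one_sub_eq_exp_sum_log (hβ : InInterior p β) :
    ∏ i, ∏ j, (if 0 < p i j then 1 - β i j else 1) =
      exp (∑ i, ∑ j, if 0 < p i j then log (1 - β i j) else 0) := by
  simp only [exp_sum]
  refine prod_congr rfl fun i _ => prod_congr rfl fun j _ => ?_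
  split_ifs with h
  · rw [exp_log (sub_pos.mpr (hβ.2 i j h).2)]
  · rw [exp_zero]

end MeanField

theorem permanent_MF_exact {n : ℕ} (p β : Matrix (Fin n) (Fin n) ℝ)
    (hp : ∀ i j, 0 ≤ p i j) (hβ : InInterior p β)
    (hMF : ∃ v w : Fin n → ℝ, (∀ i, 0 < v i) ∧ (∀ j, 0 < w j) ∧
      ∀ i j, β i j / (1 - β i j) = p i j / (v i * w j)) :
    permanent p = Real.exp (-(FMF p β)) *
      permanent (fun i j => if 0 < p i j then β i j / (1 - β i j) else 0) *
      ∏ i, ∏ j, (if 0 < p i j then 1 - β i j else 1) := by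
  obtain ⟨v, w, hv, hw, hvw⟩ := hMF
  have hV : 0 < ∏ i, v i := prod_pos fun i _ => hv i
  have hW : 0 < ∏ j, w j := prod_pos fun j _ => hw j
  have hZ : exp (-FMF p β) * ∏ i, ∏ j, (if 0 < p i j then 1 - β i j else 1) =
      (∏ i, v i) * ∏ j, w j := by
    rw [FMF_eq_of_mf_equations hp hβ hv hw hvw, prod_one_sub_eq_exp_sum_log hβ,
      ← exp_add, neg_sub, sub_add_cancel, exp_add, exp_sum, exp_sum]
    simp only [exp_log (hv _), exp_log (hw _)]
  rw [mf_ratio_eq_diag_mul_mul_diag hp hvw, permanent_diag_mul_mul_diag, prod_inv_distrib,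
    prod_inv_distrib]
  calc permanent p = (exp (-FMF p β) * ∏ i, ∏ j, (if 0 < p i j then 1 - β i j else 1)) *
        ((∏ i, v i)⁻¹ * (∏ j, w j)⁻¹ * permanent p) := by
        rw [hZ]
        field_simp
    _ = _ := by ring
end

section
/- Let p be an n×n real matrix with nonnegative entries and let γ ∈ [−1,1]. Suppose β lies in the interior of the β-polytope 𝓑_p of p and solves the γ-fractional equations for p. Then perm(p) ≤ Z_f^γ(β|p) · ( ∏_{(i,j): p_ij>0} (1−β_ij)^γ ) · ∏_{j=1}^n ( Σ_{i: p_ij>0} β_ij·(1−β_ij)^{−γ} ). -/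
open scoped BigOperators

/-!
The fractional equations say `p i j = w i * w' j * x i j` for
`x i j = β i j (1 - β i j)^(-γ)` (`fractionalWeight`), so `perm p = (∏ w i) (∏ w' j) perm x`,
and `perm x ≤ ∏ j, ∑ i, x i j` because expanding the product over the columns sums over all
maps `Fin n → Fin n`, not only the permutations. Taking logarithms in the fractional equations
gives `exp (-F_f^γ(β|p)) ∏ (1 - β i j)^γ = ∏ (w i * w' j)^(β i j)`, and since β is doubly
stochastic the right-hand side is `(∏ w i) (∏ w' j)`.
-/

open Finset

theorem Matrix.permanent_le_prod_sum_col {n R : Type*} [Fintype n] [DecidableEq n]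
    [CommSemiring R] [PartialOrder R] [IsOrderedRing R] {M : Matrix n n R}
    (hM : ∀ i j, 0 ≤ M i j) : M.permanent ≤ ∏ j, ∑ i, M i j := by
  let coeFn : Equiv.Perm n ↪ (n → n) := ⟨DFunLike.coe, DFunLike.coe_injective⟩
  calc M.permanent = ∑ f ∈ univ.map coeFn, ∏ j, M (f j) j := by
        rw [sum_map]; rfl
    _ ≤ ∑ f : n → n, ∏ j, M (f j) j :=
        sum_le_univ_sum_of_nonneg fun f => prod_nonneg fun j _ => hM (f j) j
    _ = ∏ j, ∑ i, M i j := (Fintype.prod_sum fun j i => M i j).symm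

theorem Matrix.permanent_of_mul_mul {n R : Type*} [Fintype n] [DecidableEq n] [CommSemiring R]
    (u v : n → R) (M : Matrix n n R) :
    (Matrix.of fun i j => u i * v j * M i j).permanent = (∏ i, u i) * (∏ j, v j) * M.permanent := by
  simp only [Matrix.permanent, Matrix.of_apply, mul_sum, prod_mul_distrib, Equiv.prod_comp]

theorem permanent_eq_matrix_permanent {n : ℕ} (p : Matrix (Fin n) (Fin n) ℝ) :
    permanent p = p.permanent := by
  rw [← Matrix.permanent_transpose]; rfl

theorem prod_prod_mul_rpow_eq_of_sum_eq_one {ι κ : Type*} [Fintype ι] [Fintype κ]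
    {u : ι → ℝ} {v : κ → ℝ} (hu : ∀ i, 0 < u i) (hv : ∀ j, 0 < v j) {β : ι → κ → ℝ}
    (hrow : ∀ i, ∑ j, β i j = 1) (hcol : ∀ j, ∑ i, β i j = 1) :
    ∏ i, ∏ j, (u i * v j) ^ β i j = (∏ i, u i) * ∏ j, v j := by
  simp only [Real.mul_rpow (hu _).le (hv _).le, prod_mul_distrib]
  rw [prod_comm (f := fun i j => v j ^ β i j)]
  simp only [← Real.rpow_sum_of_pos (hu _), ← Real.rpow_sum_of_pos (hv _), hrow, hcol,
    Real.rpow_one]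

theorem exp_neg_fractional_term_mul_rpow {γ b q c : ℝ} (hb : 0 < b) (hb1 : b < 1) (hq : 0 < q)
    (hc : 0 < c) (hfrac : b / (1 - b) ^ γ = q / c) :
    Real.exp (-(b * Real.log (b / q) + γ * ((1 - b) * Real.log (1 - b)))) * (1 - b) ^ γ
      = c ^ b := by
  have h1b : 0 < 1 - b := by linarith
  have hpow : (1 - b) ^ γ ≠ 0 := (Real.rpow_pos_of_pos h1b γ).ne'
  have hc_eq : c = q / b * (1 - b) ^ γ := by
    field_simp at hfrac ⊢
    linarith
  rw [Real.rpow_def_of_pos h1b, Real.rpow_def_of_pos hc, ← Real.exp_add, hc_eq,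
    Real.log_mul (by positivity) hpow, Real.log_div hq.ne' hb.ne',
    Real.log_rpow h1b, Real.log_div hb.ne' hq.ne']
  ring_nf

noncomputable def fractionalWeight {n : ℕ} (γ : ℝ) (p β : Matrix (Fin n) (Fin n) ℝ) :
    Matrix (Fin n) (Fin n) ℝ :=
  Matrix.of fun i j => if 0 < p i j then β i j * (1 - β i j) ^ (-γ) else 0

section FractionalSolution

variable {n : ℕ} {γ : ℝ} {p β : Matrix (Fin n) (Fin n) ℝ}

theorem fractionalWeight_nonneg (hβ : InInterior p β) (i j : Fin n) :
    0 ≤ fractionalWeight γ p β i j := by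
  rw [fractionalWeight, Matrix.of_apply]
  split_ifs with h
  · obtain ⟨hb0, hb1⟩ := hβ.2 i j h
    exact mul_nonneg hb0.le (Real.rpow_nonneg (by linarith) _)
  · exact le_rfl

theorem mul_mul_fractionalWeight_eq (hp : ∀ i j, 0 ≤ p i j) (hβ : InInterior p β)
    {w w' : Fin n → ℝ} (hw : ∀ i, 0 < w i) (hw' : ∀ j, 0 < w' j)
    (hfrac : ∀ i j, β i j / (1 - β i j) ^ γ = p i j / (w i * w' j)) (i j : Fin n) :
    w i * w' j * fractionalWeight γ p β i j = p i j := by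
  rw [fractionalWeight, Matrix.of_apply]
  split_ifs with h
  · have h1b : 0 < 1 - β i j := by linarith [(hβ.2 i j h).2]
    rw [Real.rpow_neg h1b.le, ← div_eq_mul_inv, hfrac,
      mul_div_cancel₀ _ (mul_pos (hw i) (hw' j)).ne']
  · rw [mul_zero]
    exact (le_antisymm (not_lt.mp h) (hp i j)).symm

theorem exp_neg_Ff_mul_prod_eq_prod_rpow (hp : ∀ i j, 0 ≤ p i j) (hβ : InInterior p β)
    {w w' : Fin n → ℝ} (hw : ∀ i, 0 < w i) (hw' : ∀ j, 0 < w' j)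
    (hfrac : ∀ i j, β i j / (1 - β i j) ^ γ = p i j / (w i * w' j)) :
    Real.exp (-(Ff γ p β)) * (∏ i, ∏ j, if 0 < p i j then (1 - β i j) ^ γ else 1)
      = ∏ i, ∏ j, (w i * w' j) ^ β i j := by
  simp only [Ff, ← sum_neg_distrib, Real.exp_sum, ← prod_mul_distrib]
  refine prod_congr rfl fun i _ => prod_congr rfl fun j _ => ?_
  split_ifs with h
  · exact exp_neg_fractional_term_mul_rpow (hβ.2 i j h).1 (hβ.2 i j h).2 h
      (mul_pos (hw i) (hw' j)) (hfrac i j)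
  · rw [hβ.1.2 i j (le_antisymm (not_lt.mp h) (hp i j))]
    simp

end FractionalSolution

theorem fractional_upper_bound_general {n : ℕ} (γ : ℝ)
    (p β : Matrix (Fin n) (Fin n) ℝ)
    (hp : ∀ i j, 0 ≤ p i j) (hβ : InInterior p β)
    (hFrac : ∃ w w' : Fin n → ℝ, (∀ i, 0 < w i) ∧ (∀ j, 0 < w' j) ∧
      ∀ i j, β i j / (1 - β i j) ^ γ = p i j / (w i * w' j)) :
    permanent p ≤ Real.exp (-(Ff γ p β)) *
      (∏ i, ∏ j, if 0 < p i j then (1 - β i j) ^ γ else 1) *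
      ∏ j, (∑ i, if 0 < p i j then β i j * (1 - β i j) ^ (-γ) else 0) := by
  obtain ⟨w, w', hw, hw', hfrac⟩ := hFrac
  have hscale : permanent p
      = (∏ i, w i) * (∏ j, w' j) * (fractionalWeight γ p β).permanent := by
    rw [permanent_eq_matrix_permanent, ← Matrix.permanent_of_mul_mul]
    congr
    ext i j
    exact (mul_mul_fractionalWeight_eq hp hβ hw hw' hfrac i j).symm
  obtain ⟨-, hrow, hcol⟩ := hβ.1.1
  rw [exp_neg_Ff_mul_prod_eq_prod_rpow hp hβ hw hw' hfrac,
    prod_prod_mul_rpow_eq_of_sum_eq_one hw hw' hrow hcol, hscale]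
  exact mul_le_mul_of_nonneg_left
    (Matrix.permanent_le_prod_sum_col (fractionalWeight_nonneg hβ))
    (mul_pos (prod_pos fun i _ => hw i) (prod_pos fun j _ => hw' j)).le

theorem fractional_upper_bound {n : ℕ} (γ : ℝ)
    (hγ : γ ∈ Set.Icc (-1 : ℝ) 1)
    (p β : Matrix (Fin n) (Fin n) ℝ)
    (hp : ∀ i j, 0 ≤ p i j) (hβ : InInterior p β)
    (hFrac : ∃ w w' : Fin n → ℝ, (∀ i, 0 < w i) ∧ (∀ j, 0 < w' j) ∧
      ∀ i j, β i j / (1 - β i j) ^ γ = p i j / (w i * w' j)) :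
    permanent p ≤ Real.exp (-(Ff γ p β)) *
      (∏ i, ∏ j, if 0 < p i j then (1 - β i j) ^ γ else 1) *
      ∏ j, (∑ i, if 0 < p i j then β i j * (1 - β i j) ^ (-γ) else 0) :=
  fractional_upper_bound_general γ p β hp hβ hFrac
end
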